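/- With the substitution s(G) = YBG, s(Y) = YBG, s(B) = BO, s(O) = YBO, the length of sⁿ(G) equals F(2n+2), where F is the Fibonacci sequence with F(1) = F(2) = 1. -/

import Mathlib

inductive HepLetter : Type
  | G | Y | B | O
deriving DecidableEq

def hepSub : HepLetter → List HepLetter
  | HepLetter.G => [HepLetter.Y, HepLetter.B, HepLetter.G]
  | HepLetter.Y => [HepLetter.Y, HepLetter.B, HepLetter.G]
  | HepLetter.B => [HepLetter.B, HepLetter.O]
  | HepLetter.O => [HepLetter.Y, HepLetter.B, HepLetter.O]

def hepStep (w : List HepLetter) : List HepLetter := w.flatMap hepSub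

/-!
Every letter has an image containing exactly one `B`, and the images have length 3 except
`s(B)`, which has length 2. Hence `|s(w)|_B = |w|` and `|s(w)| = 3|w| - |w|_B`, so the lengths
`Lₙ = |sⁿ(w)|` satisfy `Lₙ₊₂ + Lₙ = 3 Lₙ₊₁`, the recurrence of the even-indexed Fibonacci numbers.
-/

theorem Nat.fib_two_mul_add_four_add_fib_two_mul (n : ℕ) :
    Nat.fib (2 * n + 4) + Nat.fib (2 * n) = 3 * Nat.fib (2 * n + 2) := by
  have h₀ : Nat.fib (2 * n + 2) = Nat.fib (2 * n) + Nat.fib (2 * n + 1) := Nat.fib_add_two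
  have h₁ : Nat.fib (2 * n + 3) = Nat.fib (2 * n + 1) + Nat.fib (2 * n + 2) := Nat.fib_add_two
  have h₂ : Nat.fib (2 * n + 4) = Nat.fib (2 * n + 2) + Nat.fib (2 * n + 3) := Nat.fib_add_two
  omega

namespace HepLetter

theorem hepStep_cons (a : HepLetter) (w : List HepLetter) :
    hepStep (a :: w) = hepSub a ++ hepStep w :=
  List.flatMap_cons

theorem count_B_hepStep (w : List HepLetter) : (hepStep w).count B = w.length := by
  induction w with
  | nil => rfl
  | cons a w ih =>
    rw [hepStep_cons, List.count_append, ih]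
    cases a <;> simp [hepSub] <;> omega

theorem length_hepStep_add_count_B (w : List HepLetter) :
    (hepStep w).length + w.count B = 3 * w.length := by
  induction w with
  | nil => rfl
  | cons a w ih =>
    rw [hepStep_cons, List.length_append, List.count_cons]
    cases a <;> simp [hepSub] <;> omega

theorem length_iterate_hepStep_add_two (w : List HepLetter) (n : ℕ) :
    (hepStep^[n + 2] w).length + (hepStep^[n] w).length = 3 * (hepStep^[n + 1] w).length := by
  have h := length_hepStep_add_count_B (hepStep (hepStep^[n] w))
  rw [count_B_hepStep] at h
  simpa only [Function.iterate_succ_apply'] using h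

end HepLetter

theorem hep_length_fib (n : ℕ) :
    (hepStep^[n] [HepLetter.G]).length = Nat.fib (2 * n + 2) := by
  induction n using Nat.twoStepInduction with
  | zero => rfl
  | one => rfl
  | more n ih₀ ih₁ =>
    have hL := HepLetter.length_iterate_hepStep_add_two [HepLetter.G] n
    have hF := Nat.fib_two_mul_add_four_add_fib_two_mul (n + 1)
    rw [ih₀, ih₁] at hL
    ring_nf at hL hF ⊢
    omega
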